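/- Let N be a free ℤ-module of finite rank n ≥ 2 with a symmetric bilinear form (−,−) whose ℝ-linear extension to N ⊗ ℝ is nondegenerate of signature (2, n−2), extended ℂ-bilinearly to N ⊗ ℂ, let Δ = { δ ∈ N : (δ,δ) = −2 }, and let ‖·‖ be any norm on N ⊗ ℂ. Suppose Ω ∈ N ⊗ ℂ is a vector whose real and imaginary parts span a positive definite two-plane in N ⊗ ℝ and which satisfies (Ω,δ) ≠ 0 for all δ ∈ Δ. Then there is a constant r > 0 such that |(u,v)| ≤ r·‖u‖·|(Ω,v)| holds for all u ∈ N ⊗ ℂ and all v which either lie in N ⊗ ℝ with (v,v) ≥ 0 or lie in Δ. -/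

import Mathlib

/-!
STATEMENT 10 (Lemma 6.2 of the paper): a uniform bound `|(u,v)| ≤ r‖u‖|(Ω,v)|` for
vectors `v` with `(v,v) ≥ 0` and for roots `v ∈ Δ`, where `Ω` spans a positive
definite two-plane and is orthogonal to no root.

The free ℤ-module `N` of rank `n` is realised as `Fin n → ℤ`, with `N ⊗ ℝ = Fin n → ℝ`
and `N ⊗ ℂ = Fin n → ℂ`; the symmetric bilinear form is given by an integer matrix `M`,
extended ℝ- and ℂ-bilinearly.
-/

open scoped BigOperators

noncomputable section

/-- The ℝ-bilinear extension of the form given by the integer matrix `M`. -/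
def bR {n : ℕ} (M : Matrix (Fin n) (Fin n) ℤ) (u v : Fin n → ℝ) : ℝ :=
  ∑ i, ∑ j, (M i j : ℝ) * u i * v j

/-- The ℂ-bilinear extension of the form given by the integer matrix `M`. -/
def bC {n : ℕ} (M : Matrix (Fin n) (Fin n) ℤ) (u v : Fin n → ℂ) : ℂ :=
  ∑ i, ∑ j, (M i j : ℂ) * u i * v j

/-- The inclusion `N ⊗ ℝ → N ⊗ ℂ`. -/
def toC {n : ℕ} (v : Fin n → ℝ) : Fin n → ℂ := fun i => (v i : ℂ)

/-- The real part of a vector in `N ⊗ ℂ`, as a vector in `N ⊗ ℝ`. -/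
def reOf {n : ℕ} (u : Fin n → ℂ) : Fin n → ℝ := fun i => (u i).re

/-- The imaginary part of a vector in `N ⊗ ℂ`, as a vector in `N ⊗ ℝ`. -/
def imOf {n : ℕ} (u : Fin n → ℂ) : Fin n → ℝ := fun i => (u i).im


/-- The integral form given by the integer matrix `M` on `N = Fin n → ℤ`. -/
def bZ {n : ℕ} (M : Matrix (Fin n) (Fin n) ℤ) (u v : Fin n → ℤ) : ℤ :=
  ∑ i, ∑ j, M i j * u i * v j

/-- The inclusion `N → N ⊗ ℂ`. -/
def intToC {n : ℕ} (v : Fin n → ℤ) : Fin n → ℂ := fun i => (v i : ℂ)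

/-- The inclusion `N → N ⊗ ℝ`. -/
def intToR {n : ℕ} (v : Fin n → ℤ) : Fin n → ℝ := fun i => (v i : ℝ)

/-!
Write `Ω = x + i y`, so that `|(Ω, v)|² = (x, v)² + (y, v)²` for real `v`. The plane `⟨x, y⟩` is
positive definite and the signature is `(2, n - 2)`, so its orthogonal complement is negative
definite; hence `(x, v)² + (y, v)² + max (-(v, v)) 0` vanishes only at `v = 0`, and being
homogeneous of degree two it is at least `m ‖v‖²` by compactness of the unit sphere. On the cone
`(v, v) ≥ 0` this reads `|(Ω, v)|² ≥ m ‖v‖²`; for a root it reads `|(Ω, δ)|² ≥ m ‖δ‖² - 2`, which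
is enough outside a ball, and the finitely many roots inside the ball are handled by
`(Ω, δ) ≠ 0`. Finally `|(u, v)| ≤ C ‖u‖ ‖v‖`, and all norms on `N ⊗ ℂ` are equivalent.
-/

open Filter Topology Metric

lemma exists_pos_mul_norm_pow_le {E : Type*} [NormedAddCommGroup E] [NormedSpace ℝ E]
    [FiniteDimensional ℝ E] {f : E → ℝ} (hf : Continuous f) {k : ℕ} (hk : k ≠ 0)
    (hhom : ∀ t : ℝ, 0 ≤ t → ∀ v, f (t • v) = t ^ k * f v) (hpos : ∀ v ≠ 0, 0 < f v) :
    ∃ m > 0, ∀ v, m * ‖v‖ ^ k ≤ f v := by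
  obtain ⟨m, hm, hmin⟩ := (isCompact_sphere (0 : E) 1).exists_forall_le' hf.continuousOn
    fun v hv => hpos v (ne_zero_of_mem_unit_sphere ⟨v, hv⟩)
  refine ⟨m, hm, fun v => ?_⟩
  rcases eq_or_ne v 0 with rfl | hv
  · have hf0 : f 0 = 0 := by simpa [zero_pow hk] using hhom 0 le_rfl 0
    simp [hf0, zero_pow hk]
  · have hv' : 0 < ‖v‖ := norm_pos_iff.2 hv
    have hunit : ‖v‖⁻¹ • v ∈ sphere (0 : E) 1 := by
      simp [norm_smul, inv_mul_cancel₀ hv'.ne']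
    calc m * ‖v‖ ^ k ≤ f (‖v‖⁻¹ • v) * ‖v‖ ^ k := by gcongr; exact hmin _ hunit
      _ = f v := by
        rw [hhom _ (by positivity), mul_comm, ← mul_assoc, ← mul_pow, mul_inv_cancel₀ hv'.ne',
          one_pow, one_mul]

lemma Seminorm.exists_pos_mul_norm_le {E : Type*} [NormedAddCommGroup E] [NormedSpace ℂ E]
    [FiniteDimensional ℂ E] (p : Seminorm ℂ E) (hp : ∀ u, p u = 0 → u = 0) :
    ∃ m > 0, ∀ u, m * ‖u‖ ≤ p u := by
  have hcont : Continuous p := continuousOn_univ.mp (p.convexOn.continuousOn isOpen_univ)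
  have hhom (t : ℝ) (ht : 0 ≤ t) (u : E) : p (t • u) = t ^ 1 * p u := by
    rw [← Complex.coe_smul, map_smul_eq_mul, Complex.norm_real, Real.norm_of_nonneg ht, pow_one]
  simpa using exists_pos_mul_norm_pow_le hcont one_ne_zero hhom
    fun u hu => (apply_nonneg p u).lt_of_ne' (mt (hp u) hu)

lemma LinearMap.exists_bound₂_of_finiteDimensional {𝕜 E F G : Type*} [NontriviallyNormedField 𝕜]
    [CompleteSpace 𝕜] [NormedAddCommGroup E] [NormedSpace 𝕜 E] [FiniteDimensional 𝕜 E]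
    [NormedAddCommGroup F] [NormedSpace 𝕜 F] [FiniteDimensional 𝕜 F]
    [NormedAddCommGroup G] [NormedSpace 𝕜 G] (B : E →ₗ[𝕜] F →ₗ[𝕜] G) :
    ∃ C, ∀ x y, ‖B x y‖ ≤ C * ‖x‖ * ‖y‖ :=
  let L : E →L[𝕜] F →L[𝕜] G :=
    LinearMap.toContinuousLinearMap (LinearMap.toContinuousLinearMap.toLinearMap ∘ₗ B)
  ⟨‖L‖, L.le_opNorm₂⟩

lemma exists_pos_mul_sq_norm_le_of_add_le {α : Type*} [SeminormedAddCommGroup α] [ProperSpace α]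
    [DiscreteTopology α] {S : Set α} {f : α → ℝ} (hpos : ∀ δ ∈ S, 0 < f δ) {m K : ℝ}
    (hm : 0 < m) (hf : ∀ δ ∈ S, m * ‖δ‖ ^ 2 ≤ f δ + K) :
    ∃ c > 0, ∀ δ ∈ S, c * ‖δ‖ ^ 2 ≤ f δ := by
  set R := √(2 * K / m)
  have hfin : (S ∩ closedBall 0 R).Finite :=
    (isCompact_closedBall 0 R).finite_of_discrete.subset Set.inter_subset_right
  have hsmall : ∀ᶠ c in 𝓝[>] (0 : ℝ), ∀ δ ∈ S ∩ closedBall 0 R, c * ‖δ‖ ^ 2 ≤ f δ :=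
    hfin.eventually_all.2 fun δ hδ => by
      have : Tendsto (fun c : ℝ => c * ‖δ‖ ^ 2) (𝓝 0) (𝓝 0) := by
        simpa using (continuous_mul_const (‖δ‖ ^ 2)).tendsto 0
      exact (this.mono_left nhdsWithin_le_nhds).eventually (ge_mem_nhds (hpos δ hδ.1))
  have hhalf : ∀ᶠ c in 𝓝[>] (0 : ℝ), c ≤ m / 2 :=
    nhdsWithin_le_nhds (Iic_mem_nhds (half_pos hm))
  obtain ⟨c, ⟨hcS, hcm⟩, hc⟩ := ((hsmall.and hhalf).and self_mem_nhdsWithin).exists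
  refine ⟨c, hc, fun δ hδ => ?_⟩
  by_cases hδR : ‖δ‖ ≤ R
  · exact hcS δ ⟨hδ, mem_closedBall_zero_iff.2 hδR⟩
  · have hK : 2 * K / m < ‖δ‖ ^ 2 :=
      (Real.sqrt_lt' ((Real.sqrt_nonneg _).trans_lt (not_le.1 hδR))).1 (not_le.1 hδR)
    rw [div_lt_iff₀ hm] at hK
    nlinarith [hf δ hδ, sq_nonneg ‖δ‖]

lemma Module.Basis.exists_ne_zero_repr_sum_smul_eq_zero {V ι : Type*} [AddCommGroup V]
    [Module ℝ V] [Fintype ι] {n : ℕ} (e : Module.Basis (Fin n) ℝ V) (hι : 2 < Fintype.card ι)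
    (a : ι → V) :
    ∃ c : ι → ℝ, c ≠ 0 ∧ ∀ i : Fin n, (i : ℕ) < 2 → e.repr (∑ k, c k • a k) i = 0 := by
  let ψ : (ι → ℝ) →ₗ[ℝ] ({i : Fin n // (i : ℕ) < 2} → ℝ) :=
    LinearMap.pi fun i => Finsupp.lapply i.1 ∘ₗ e.repr.toLinearMap ∘ₗ Fintype.linearCombination ℝ a
  have hcard : Fintype.card {i : Fin n // (i : ℕ) < 2} ≤ 2 := by
    simpa using Fintype.card_le_of_injective
      (fun i : {i : Fin n // (i : ℕ) < 2} => (⟨i.1, i.2⟩ : Fin 2))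
      fun i j h => Subtype.ext (Fin.ext (by simpa using h))
  obtain ⟨c, hc, hc0⟩ := Submodule.exists_mem_ne_zero_of_ne_bot
    (LinearMap.ker_ne_bot_of_finrank_lt (f := ψ) (by simpa using hcard.trans_lt hι))
  refine ⟨c, hc0, fun i hi => ?_⟩
  simpa [ψ, Fintype.linearCombination_apply] using congrFun (LinearMap.mem_ker.1 hc) ⟨i, hi⟩

namespace LinearMap.BilinForm

section Signature

variable {V : Type*} [AddCommGroup V] [Module ℝ V] {B : LinearMap.BilinForm ℝ V} {n : ℕ}

lemma apply_self_eq_neg_sum_sq (e : Module.Basis (Fin n) ℝ V)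
    (he : ∀ i j, B (e i) (e j) = if i = j then (if (i : ℕ) < 2 then 1 else -1) else 0)
    {w : V} (hw : ∀ i : Fin n, (i : ℕ) < 2 → e.repr w i = 0) :
    B w w = -∑ i, e.repr w i ^ 2 := by
  conv_lhs => rw [← e.sum_repr w]
  simp only [map_sum, map_smul, LinearMap.sum_apply, LinearMap.smul_apply, he, smul_eq_mul,
    mul_ite, mul_zero, Finset.sum_ite_eq', Finset.mem_univ, if_true, ← Finset.sum_neg_distrib]
  refine Finset.sum_congr rfl fun i _ => ?_
  split_ifs with hi
  · simp [hw i hi]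
  · ring

lemma eq_zero_of_repr_eq_zero_of_apply_self_nonneg (e : Module.Basis (Fin n) ℝ V)
    (he : ∀ i j, B (e i) (e j) = if i = j then (if (i : ℕ) < 2 then 1 else -1) else 0)
    {w : V} (hw : ∀ i : Fin n, (i : ℕ) < 2 → e.repr w i = 0) (hww : 0 ≤ B w w) : w = 0 := by
  rw [apply_self_eq_neg_sum_sq e he hw, neg_nonneg] at hww
  have hsq := (Finset.sum_eq_zero_iff_of_nonneg fun i _ => sq_nonneg (e.repr w i)).1
    (hww.antisymm (Finset.sum_nonneg fun i _ => sq_nonneg _))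
  exact e.repr.map_eq_zero_iff.1
    (Finsupp.ext fun i => (pow_eq_zero_iff two_ne_zero).1 (hsq i (Finset.mem_univ i)))

lemma apply_self_nonneg_of_forall_pos {x y : V}
    (hP : ∀ a b : ℝ, ¬ (a = 0 ∧ b = 0) → 0 < B (a • x + b • y) (a • x + b • y)) (a b : ℝ) :
    0 ≤ B (a • x + b • y) (a • x + b • y) := by
  by_cases hab : a = 0 ∧ b = 0
  · simp [hab.1, hab.2]
  · exact (hP a b hab).le

lemma eq_zero_of_isOrtho_of_apply_self_nonneg (hB : B.IsSymm) (e : Module.Basis (Fin n) ℝ V)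
    (he : ∀ i j, B (e i) (e j) = if i = j then (if (i : ℕ) < 2 then 1 else -1) else 0)
    {x y : V} (hP : ∀ a b : ℝ, ¬ (a = 0 ∧ b = 0) → 0 < B (a • x + b • y) (a • x + b • y))
    {v : V} (hxv : B x v = 0) (hyv : B y v = 0) (hv : 0 ≤ B v v) : v = 0 := by
  -- a nontrivial combination of `x, y, v` lies in the negative definite span of `e 2, e 3, …`
  obtain ⟨c, hc, hrepr⟩ := e.exists_ne_zero_repr_sum_smul_eq_zero (by simp) ![x, y, v]
  set p := c 0 • x + c 1 • y
  have hsum : ∑ k, c k • ![x, y, v] k = p + c 2 • v := by simp [Fin.sum_univ_three, p]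
  have hpv : B p v = 0 := by simp [p, hxv, hyv]
  have hexpand : B (p + c 2 • v) (p + c 2 • v) = B p p + c 2 ^ 2 * B v v := by
    simp only [map_add, map_smul, LinearMap.add_apply, LinearMap.smul_apply, smul_eq_mul, hpv,
      hB.eq v p]
    ring
  have hp := apply_self_nonneg_of_forall_pos hP (c 0) (c 1)
  have hw : p + c 2 • v = 0 := by
    rw [← hsum] at hexpand ⊢
    exact eq_zero_of_repr_eq_zero_of_apply_self_nonneg e he hrepr (by rw [hexpand]; positivity)
  have hpp : B p p = 0 := by
    rw [hw, map_zero] at hexpand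
    nlinarith [mul_nonneg (sq_nonneg (c 2)) hv]
  have hc01 : c 0 = 0 ∧ c 1 = 0 := by
    by_contra h
    exact (hP _ _ h).ne' hpp
  have hc2 : c 2 ≠ 0 := fun h2 => hc (by ext k; fin_cases k <;> simp [hc01.1, hc01.2, h2])
  simpa [p, hc01.1, hc01.2, hc2] using hw

end Signature

section Normed

variable {V : Type*} [NormedAddCommGroup V] [NormedSpace ℝ V] {B : LinearMap.BilinForm ℝ V}
  {n : ℕ}

lemma continuous_apply_self [FiniteDimensional ℝ V] (B : LinearMap.BilinForm ℝ V) :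
    Continuous fun v => B v v :=
  ((LinearMap.toContinuousLinearMap.toLinearMap ∘ₗ B).continuous_of_finiteDimensional).clm_apply
    continuous_id

lemma exists_pos_mul_sq_norm_le (hB : B.IsSymm) (e : Module.Basis (Fin n) ℝ V)
    (he : ∀ i j, B (e i) (e j) = if i = j then (if (i : ℕ) < 2 then 1 else -1) else 0)
    {x y : V} (hP : ∀ a b : ℝ, ¬ (a = 0 ∧ b = 0) → 0 < B (a • x + b • y) (a • x + b • y)) :
    ∃ m > 0, ∀ v, m * ‖v‖ ^ 2 ≤ B x v ^ 2 + B y v ^ 2 + max (-B v v) 0 := by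
  have := e.finiteDimensional_of_finite
  have hcont : Continuous fun v => B x v ^ 2 + B y v ^ 2 + max (-B v v) 0 :=
    ((((B x).continuous_of_finiteDimensional).pow 2).add
      (((B y).continuous_of_finiteDimensional).pow 2)).add
      (B.continuous_apply_self.neg.max continuous_const)
  refine exists_pos_mul_norm_pow_le hcont two_ne_zero (fun t ht v => ?_) (fun v hv => ?_)
  · simp only [map_smul, LinearMap.smul_apply, smul_eq_mul]
    rw [mul_add, mul_add, mul_max_of_nonneg _ _ (by positivity)]
    ring_nf
  · by_contra hle
    refine hv (eq_zero_of_isOrtho_of_apply_self_nonneg hB e he hP ?_ ?_ ?_) <;>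
      nlinarith [sq_nonneg (B x v), sq_nonneg (B y v), le_max_left (-B v v) 0,
        le_max_right (-B v v) 0]

end Normed

end LinearMap.BilinForm

section IntegralForm

variable {n : ℕ} (M : Matrix (Fin n) (Fin n) ℤ)

def formR : LinearMap.BilinForm ℝ (Fin n → ℝ) := Matrix.toBilin' (M.map (↑))

lemma formR_apply (u v : Fin n → ℝ) : formR M u v = bR M u v := by
  simp only [formR, Matrix.toBilin'_apply, Matrix.map_apply, bR]
  exact Finset.sum_congr rfl fun i _ => Finset.sum_congr rfl fun j _ => by ring

lemma isSymm_formR (hsymm : ∀ i j, M i j = M j i) : (formR M).IsSymm :=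
  ⟨fun u v => by
    simp only [formR_apply, bR]
    rw [Finset.sum_comm]
    exact Finset.sum_congr rfl fun j _ => Finset.sum_congr rfl fun i _ => by rw [hsymm]; ring⟩

def formC : (Fin n → ℂ) →ₗ[ℂ] (Fin n → ℂ) →ₗ[ℂ] ℂ := Matrix.toLinearMap₂' ℂ (M.map (↑))

lemma formC_apply (u v : Fin n → ℂ) : formC M u v = bC M u v := by
  simp only [formC, Matrix.toLinearMap₂'_apply, Matrix.map_apply, smul_eq_mul, bC]
  exact Finset.sum_congr rfl fun i _ => Finset.sum_congr rfl fun j _ => by ring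

lemma sq_norm_bC_toC (Ω : Fin n → ℂ) (v : Fin n → ℝ) :
    ‖bC M Ω (toC v)‖ ^ 2 = bR M (reOf Ω) v ^ 2 + bR M (imOf Ω) v ^ 2 := by
  rw [Complex.sq_norm, Complex.normSq_apply, ← sq, ← sq]
  congr 2 <;> simp [bC, bR, toC, reOf, imOf, Complex.re_sum, Complex.im_sum]

lemma toC_intToR (δ : Fin n → ℤ) : toC (intToR δ) = intToC δ := by
  ext i; simp [toC, intToR, intToC]

lemma bR_intToR (δ : Fin n → ℤ) : bR M (intToR δ) (intToR δ) = bZ M δ δ := by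
  simp [bR, bZ, intToR]

lemma norm_intToC (δ : Fin n → ℤ) : ‖intToC δ‖ = ‖δ‖ := by
  simp [Pi.norm_def, intToC]

lemma norm_toC (v : Fin n → ℝ) : ‖toC v‖ = ‖v‖ := by
  simp [Pi.norm_def, toC]

lemma exists_norm_bC_le (nrm : Seminorm ℂ (Fin n → ℂ)) (hnrm : ∀ u, nrm u = 0 → u = 0) :
    ∃ C > 0, ∀ u w, ‖bC M u w‖ ≤ C * nrm u * ‖w‖ := by
  obtain ⟨C, hC⟩ := (formC M).exists_bound₂_of_finiteDimensional
  obtain ⟨m, hm, hnrm⟩ := nrm.exists_pos_mul_norm_le hnrm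
  refine ⟨(|C| + 1) / m, by positivity, fun u w => ?_⟩
  calc ‖bC M u w‖ ≤ C * ‖u‖ * ‖w‖ := formC_apply M u w ▸ hC u w
    _ ≤ (|C| + 1) * (nrm u / m) * ‖w‖ := by
      gcongr
      · exact (le_abs_self C).trans (le_add_of_nonneg_right zero_le_one)
      · exact (le_div_iff₀' hm).2 (hnrm u)
    _ = (|C| + 1) / m * nrm u * ‖w‖ := by ring

lemma norm_bC_le_of_mul_sq_norm_le {nrm : Seminorm ℂ (Fin n → ℂ)} {C a : ℝ} (hC : 0 ≤ C)
    (hbound : ∀ u w, ‖bC M u w‖ ≤ C * nrm u * ‖w‖) (ha : 0 < a) {Ω w : Fin n → ℂ}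
    (hw : a * ‖w‖ ^ 2 ≤ ‖bC M Ω w‖ ^ 2) (u : Fin n → ℂ) :
    ‖bC M u w‖ ≤ C / √a * nrm u * ‖bC M Ω w‖ := by
  have hsqrt : √a * ‖w‖ ≤ ‖bC M Ω w‖ := by
    rwa [← sq_le_sq₀ (by positivity) (norm_nonneg _), mul_pow, Real.sq_sqrt ha.le]
  calc ‖bC M u w‖ ≤ C * nrm u * ‖w‖ := hbound u w
    _ = C / √a * nrm u * (√a * ‖w‖) := by field_simp
    _ ≤ C / √a * nrm u * ‖bC M Ω w‖ := by gcongr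

end IntegralForm

theorem bound_on_positive_cone_and_roots_general {n : ℕ}
    (M : Matrix (Fin n) (Fin n) ℤ) (hsymm : ∀ i j, M i j = M j i)
    -- the real extension of the form is nondegenerate of signature (2, n-2):
    (e : Module.Basis (Fin n) ℝ (Fin n → ℝ))
    (he : ∀ i j, bR M (e i) (e j) =
      if i = j then (if (i : ℕ) < 2 then 1 else -1) else 0)
    -- an arbitrary norm on the finite-dimensional complex vector space `N ⊗ ℂ`:
    (nrm : Seminorm ℂ (Fin n → ℂ)) (hnrm : ∀ u : Fin n → ℂ, nrm u = 0 → u = 0)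
    -- `Ω` spans a positive definite two-plane in `N ⊗ ℝ`:
    (Ω : Fin n → ℂ)
    (hΩ : ∀ a b : ℝ, ¬ (a = 0 ∧ b = 0) →
      0 < bR M (a • reOf Ω + b • imOf Ω) (a • reOf Ω + b • imOf Ω))
    -- `Ω` is orthogonal to no root `δ ∈ Δ`:
    (hroot : ∀ δ : Fin n → ℤ, bZ M δ δ = -2 → bC M Ω (intToC δ) ≠ 0) :
    ∃ r : ℝ, 0 < r ∧
      (∀ (u : Fin n → ℂ) (v : Fin n → ℝ), 0 ≤ bR M v v →
        ‖bC M u (toC v)‖ ≤ r * nrm u * ‖bC M Ω (toC v)‖) ∧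
      (∀ (u : Fin n → ℂ) (δ : Fin n → ℤ), bZ M δ δ = -2 →
        ‖bC M u (intToC δ)‖ ≤
          r * nrm u * ‖bC M Ω (intToC δ)‖) := by
  obtain ⟨m, hm, hquad⟩ : ∃ m > 0, ∀ v : Fin n → ℝ,
      m * ‖toC v‖ ^ 2 ≤ ‖bC M Ω (toC v)‖ ^ 2 + max (-bR M v v) 0 := by
    simpa only [formR_apply, sq_norm_bC_toC, norm_toC] using
      (formR M).exists_pos_mul_sq_norm_le (isSymm_formR M hsymm) e
        (by simpa only [formR_apply] using he) (by simpa only [formR_apply] using hΩ)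
  have hcone (v : Fin n → ℝ) (hv : 0 ≤ bR M v v) : m * ‖toC v‖ ^ 2 ≤ ‖bC M Ω (toC v)‖ ^ 2 := by
    simpa [hv] using hquad v
  obtain ⟨c, hc, hroots⟩ : ∃ c > 0, ∀ δ ∈ {δ | bZ M δ δ = -2},
      c * ‖intToC δ‖ ^ 2 ≤ ‖bC M Ω (intToC δ)‖ ^ 2 := by
    simp only [norm_intToC]
    refine exists_pos_mul_sq_norm_le_of_add_le
      (fun δ hδ => pow_pos (norm_pos_iff.2 (hroot δ hδ)) 2) hm (K := 2) fun δ hδ => ?_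
    simpa [← toC_intToR, ← norm_intToC, bR_intToR, show bZ M δ δ = -2 from hδ] using
      hquad (intToR δ)
  obtain ⟨C, hC, hbound⟩ := exists_norm_bC_le M nrm hnrm
  have hmin {w : Fin n → ℂ} {a : ℝ} (ha : min m c ≤ a) (hw : a * ‖w‖ ^ 2 ≤ ‖bC M Ω w‖ ^ 2) :
      min m c * ‖w‖ ^ 2 ≤ ‖bC M Ω w‖ ^ 2 :=
    (mul_le_mul_of_nonneg_right ha (sq_nonneg _)).trans hw
  refine ⟨C / √(min m c), by positivity, fun u v hv => ?_, fun u δ hδ => ?_⟩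
  · exact norm_bC_le_of_mul_sq_norm_le M hC.le hbound (lt_min hm hc)
      (hmin (min_le_left m c) (hcone v hv)) u
  · exact norm_bC_le_of_mul_sq_norm_le M hC.le hbound (lt_min hm hc)
      (hmin (min_le_right m c) (hroots δ hδ)) u

theorem bound_on_positive_cone_and_roots {n : ℕ} (hn : 2 ≤ n)
    (M : Matrix (Fin n) (Fin n) ℤ) (hsymm : ∀ i j, M i j = M j i)
    -- the real extension of the form is nondegenerate of signature (2, n-2):
    (e : Module.Basis (Fin n) ℝ (Fin n → ℝ))
    (he : ∀ i j, bR M (e i) (e j) =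
      if i = j then (if (i : ℕ) < 2 then 1 else -1) else 0)
    -- an arbitrary norm on the finite-dimensional complex vector space `N ⊗ ℂ`:
    (nrm : Seminorm ℂ (Fin n → ℂ)) (hnrm : ∀ u : Fin n → ℂ, nrm u = 0 → u = 0)
    -- `Ω` spans a positive definite two-plane in `N ⊗ ℝ`:
    (Ω : Fin n → ℂ)
    (hΩ : ∀ a b : ℝ, ¬ (a = 0 ∧ b = 0) →
      0 < bR M (a • reOf Ω + b • imOf Ω) (a • reOf Ω + b • imOf Ω))
    -- `Ω` is orthogonal to no root `δ ∈ Δ`: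
    (hroot : ∀ δ : Fin n → ℤ, bZ M δ δ = -2 → bC M Ω (intToC δ) ≠ 0) :
    ∃ r : ℝ, 0 < r ∧
      (∀ (u : Fin n → ℂ) (v : Fin n → ℝ), 0 ≤ bR M v v →
        ‖bC M u (toC v)‖ ≤ r * nrm u * ‖bC M Ω (toC v)‖) ∧
      (∀ (u : Fin n → ℂ) (δ : Fin n → ℤ), bZ M δ δ = -2 →
        ‖bC M u (intToC δ)‖ ≤
          r * nrm u * ‖bC M Ω (intToC δ)‖) :=
  bound_on_positive_cone_and_roots_general M hsymm e he nrm hnrm Ω hΩ hroot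

end
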